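/- arXiv:2106.06153 — 2 statements merged into one kernel-verified Lean document; each statement's English description precedes it below -/
import Mathlib

section
/- Decomposition Theorem: Let E be a real normed vector space, let s > 0, let 0 < m_u ≤ M_u, and let a, C, C′ ≥ 0 and T, n > 0. Let f, f_v, f_b : E → ℝ and points θ*, θ*_v, θ*_b, θ̂, θ̂_v, θ̂_b ∈ E satisfy: (i) f(θ) ≤ M_u ‖θ − θ*‖^s for all θ; (ii) f_v(θ) ≥ m_u ‖θ − θ*_v‖^s and f_b(θ) ≥ m_u ‖θ − θ*_b‖^s for all θ; (iii) the Dynamics Decomposition Condition ‖θ̂ − θ*‖ ≤ a(‖θ̂_v − θ*_v‖ + ‖θ̂_b − θ*_b‖) + C/√T + C′/√n. Then f(θ̂) ≤ (4a)^s (M_u/m_u) [ f_v(θ̂_v) + f_b(θ̂_b) ] + M_u (4C/√T)^s + M_u (4C′/√n)^s. -/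
lemma four_sum_rpow (s t1 t2 t3 t4 : ℝ) (hs : 0 ≤ s)
    (h1 : 0 ≤ t1) (h2 : 0 ≤ t2) (h3 : 0 ≤ t3) (h4 : 0 ≤ t4) :
    (t1 + t2 + t3 + t4) ^ s ≤ (4 * t1) ^ s + (4 * t2) ^ s + (4 * t3) ^ s + (4 * t4) ^ s := by
  set M := max (max t1 t2) (max t3 t4) with hM
  have hMt1 : t1 ≤ M := le_max_of_le_left (le_max_left _ _)
  have hMt2 : t2 ≤ M := le_max_of_le_left (le_max_right _ _)
  have hMt3 : t3 ≤ M := le_max_of_le_right (le_max_left _ _)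
  have hMt4 : t4 ≤ M := le_max_of_le_right (le_max_right _ _)
  have hstep : (t1 + t2 + t3 + t4) ^ s ≤ (4 * M) ^ s :=
    Real.rpow_le_rpow (by linarith) (by linarith) hs
  refine hstep.trans ?_
  have n1 : 0 ≤ (4 * t1) ^ s := Real.rpow_nonneg (by linarith) s
  have n2 : 0 ≤ (4 * t2) ^ s := Real.rpow_nonneg (by linarith) s
  have n3 : 0 ≤ (4 * t3) ^ s := Real.rpow_nonneg (by linarith) s
  have n4 : 0 ≤ (4 * t4) ^ s := Real.rpow_nonneg (by linarith) s
  rcases max_cases (max t1 t2) (max t3 t4) with ⟨ho, _⟩ | ⟨ho, _⟩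
  · rcases max_cases t1 t2 with ⟨hi, _⟩ | ⟨hi, _⟩
    · rw [hM, ho, hi]; linarith
    · rw [hM, ho, hi]; linarith
  · rcases max_cases t3 t4 with ⟨hi, _⟩ | ⟨hi, _⟩
    · rw [hM, ho, hi]; linarith
    · rw [hM, ho, hi]; linarith

/-- **Decomposition Theorem.**  In a real normed vector space `E`, given a local sharpness
factor `s > 0`, uniform sharpness bounds `0 < m_u ≤ M_u`, DDC parameters `a, C, C' ≥ 0`,
time `T > 0` and sample size `n > 0`: if the excess risk `f` is bounded above by
`M_u‖θ - θ*‖^s`, the variance and bias excess risks `f_v, f_b` are bounded below by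
`m_u‖θ - θ*_v‖^s` and `m_u‖θ - θ*_b‖^s`, and the Dynamics Decomposition Condition holds,
then `f θ̂ ≤ (4a)^s (M_u/m_u) (f_v θ̂_v + f_b θ̂_b) + M_u (4C/√T)^s + M_u (4C'/√n)^s`. -/
theorem decomposition_theorem {E : Type*} [NormedAddCommGroup E] [NormedSpace ℝ E]
    (s mu Mu a C C' T n : ℝ)
    (hs : 0 < s) (hmu : 0 < mu) (hmM : mu ≤ Mu)
    (ha : 0 ≤ a) (hC : 0 ≤ C) (hC' : 0 ≤ C') (hT : 0 < T) (hn : 0 < n)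
    (f fv fb : E → ℝ)
    (θstar θstarv θstarb θhat θhatv θhatb : E)
    (hf : ∀ θ : E, f θ ≤ Mu * ‖θ - θstar‖ ^ s)
    (hfv : ∀ θ : E, mu * ‖θ - θstarv‖ ^ s ≤ fv θ)
    (hfb : ∀ θ : E, mu * ‖θ - θstarb‖ ^ s ≤ fb θ)
    (hDDC : ‖θhat - θstar‖ ≤ a * (‖θhatv - θstarv‖ + ‖θhatb - θstarb‖)
      + C / Real.sqrt T + C' / Real.sqrt n) :
    f θhat ≤ (4 * a) ^ s * (Mu / mu) * (fv θhatv + fb θhatb)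
      + Mu * (4 * C / Real.sqrt T) ^ s + Mu * (4 * C' / Real.sqrt n) ^ s := by
  set x := ‖θhatv - θstarv‖ with hxdef
  set y := ‖θhatb - θstarb‖ with hydef
  have hx : 0 ≤ x := norm_nonneg _
  have hy : 0 ≤ y := norm_nonneg _
  have hc : 0 ≤ C / Real.sqrt T := by positivity
  have hc' : 0 ≤ C' / Real.sqrt n := by positivity
  have hMu : 0 < Mu := lt_of_lt_of_le hmu hmM
  have h1 : f θhat ≤ Mu * ‖θhat - θstar‖ ^ s := hf θhat
  have h2 : ‖θhat - θstar‖ ^ s ≤ (a * x + a * y + C / Real.sqrt T + C' / Real.sqrt n) ^ s := by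
    apply Real.rpow_le_rpow (norm_nonneg _) _ hs.le
    calc ‖θhat - θstar‖ ≤ a * (x + y) + C / Real.sqrt T + C' / Real.sqrt n := hDDC
      _ = a * x + a * y + C / Real.sqrt T + C' / Real.sqrt n := by ring
  have h3 := four_sum_rpow s (a * x) (a * y) (C / Real.sqrt T) (C' / Real.sqrt n) hs.le
    (by positivity) (by positivity) hc hc'
  have e1 : (4 * (a * x)) ^ s = (4 * a) ^ s * x ^ s := by
    rw [show (4 : ℝ) * (a * x) = (4 * a) * x by ring, Real.mul_rpow (by linarith) hx]
  have e2 : (4 * (a * y)) ^ s = (4 * a) ^ s * y ^ s := by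
    rw [show (4 : ℝ) * (a * y) = (4 * a) * y by ring, Real.mul_rpow (by linarith) hy]
  have e3 : (4 * (C / Real.sqrt T)) ^ s = (4 * C / Real.sqrt T) ^ s := by ring_nf
  have e4 : (4 * (C' / Real.sqrt n)) ^ s = (4 * C' / Real.sqrt n) ^ s := by ring_nf
  have hvx : Mu * x ^ s ≤ (Mu / mu) * fv θhatv := by
    have := hfv θhatv
    rw [div_mul_eq_mul_div, le_div_iff₀ hmu]
    nlinarith [Real.rpow_nonneg hx s]
  have hby : Mu * y ^ s ≤ (Mu / mu) * fb θhatb := by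
    have := hfb θhatb
    rw [div_mul_eq_mul_div, le_div_iff₀ hmu]
    nlinarith [Real.rpow_nonneg hy s]
  have h4as : 0 ≤ (4 * a) ^ s := Real.rpow_nonneg (by linarith) s
  calc f θhat ≤ Mu * ‖θhat - θstar‖ ^ s := h1
    _ ≤ Mu * (a * x + a * y + C / Real.sqrt T + C' / Real.sqrt n) ^ s := by
        exact mul_le_mul_of_nonneg_left h2 hMu.le
    _ ≤ Mu * ((4 * (a * x)) ^ s + (4 * (a * y)) ^ s + (4 * (C / Real.sqrt T)) ^ s
        + (4 * (C' / Real.sqrt n)) ^ s) := mul_le_mul_of_nonneg_left h3 hMu.le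
    _ = (4 * a) ^ s * (Mu * x ^ s) + (4 * a) ^ s * (Mu * y ^ s)
        + Mu * (4 * C / Real.sqrt T) ^ s + Mu * (4 * C' / Real.sqrt n) ^ s := by
        rw [e1, e2, e3, e4]; ring
    _ ≤ (4 * a) ^ s * ((Mu / mu) * fv θhatv) + (4 * a) ^ s * ((Mu / mu) * fb θhatb)
        + Mu * (4 * C / Real.sqrt T) ^ s + Mu * (4 * C' / Real.sqrt n) ^ s := by
        have := mul_le_mul_of_nonneg_left hvx h4as
        have := mul_le_mul_of_nonneg_left hby h4as
        linarith
    _ = (4 * a) ^ s * (Mu / mu) * (fv θhatv + fb θhatb)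
        + Mu * (4 * C / Real.sqrt T) ^ s + Mu * (4 * C' / Real.sqrt n) ^ s := by ring
end

section
/- Uniform stability of gradient descent on neighboring noise datasets: let X, X′ ∈ ℝ^{n×p} agree in all rows except possibly one, with every row of X and X′ having Euclidean norm at most 1; let ε, ε′ ∈ ℝⁿ agree in all entries except possibly the same index, with all entries bounded in absolute value by V. Let 0 < λ ≤ 1, and let θ^{(t)} and θ′^{(t)} be the gradient descent iterates θ^{(t+1)} = θ^{(t)} + (λ/n) Xᵀ(ε − Xθ^{(t)}) and θ′^{(t+1)} = θ′^{(t)} + (λ/n) X′ᵀ(ε′ − X′θ′^{(t)}), both from initialization 0. If ‖θ′^{(t)}‖ ≤ B for all t < T, then ‖θ^{(T)} − θ′^{(T)}‖ ≤ (2Tλ/n)(V + B). -/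
/-!
Write `v = θ - θ'`. Replacing `θ'` by `θ` in one update with the same data changes the result by
`v - c Xᵀ X v`, and since `‖Xᵀ X v‖² ≤ n ‖X v‖² = n ⟪v, Xᵀ X v⟫`, the map `v ↦ v - c Xᵀ X v`
is non-expansive as soon as `c n ≤ 2`. Swapping the data at the one index where it differs moves
the update by at most `c` times two residual terms, each bounded by `V + B`. Summing the per-step
increments `2 c (V + B)` over `T` steps gives the bound.
-/

open Finset

section GradientStep

variable {ι E : Type*} [Fintype ι] [NormedAddCommGroup E] [InnerProductSpace ℝ E]

/-- One gradient descent step `θ + c Xᵀ (y - X θ)` for least squares with rows `x i` and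
responses `y i`. -/
def gdStep (c : ℝ) (x : ι → E) (y : ι → ℝ) (θ : E) : E :=
  θ + c • ∑ i, (y i - inner ℝ (x i) θ) • x i

lemma inner_sum_inner_smul (x : ι → E) (v : E) :
    inner ℝ v (∑ i, inner ℝ (x i) v • x i) = ∑ i, inner ℝ (x i) v ^ 2 := by
  simp only [inner_sum, real_inner_smul_right, real_inner_comm v, sq]

lemma norm_sum_inner_smul_sq_le {x : ι → E} (hx : ∀ i, ‖x i‖ ≤ 1) (v : E) :
    ‖∑ i, inner ℝ (x i) v • x i‖ ^ 2 ≤ Fintype.card ι * ∑ i, inner ℝ (x i) v ^ 2 := by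
  have hl1 : ‖∑ i, inner ℝ (x i) v • x i‖ ≤ ∑ i, |inner ℝ (x i) v| := by
    refine (norm_sum_le _ _).trans (sum_le_sum fun i _ => ?_)
    rw [norm_smul, Real.norm_eq_abs]
    exact mul_le_of_le_one_right (abs_nonneg _) (hx i)
  calc ‖∑ i, inner ℝ (x i) v • x i‖ ^ 2 ≤ (∑ i, |inner ℝ (x i) v|) ^ 2 := by gcongr
    _ ≤ Fintype.card ι * ∑ i, |inner ℝ (x i) v| ^ 2 := sq_sum_le_card_mul_sum_sq
    _ = Fintype.card ι * ∑ i, inner ℝ (x i) v ^ 2 := by simp only [sq_abs]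

lemma norm_sub_smul_sum_inner_smul_le {x : ι → E} (hx : ∀ i, ‖x i‖ ≤ 1) {c : ℝ} (hc : 0 ≤ c)
    (hcn : c * Fintype.card ι ≤ 2) (v : E) :
    ‖v - c • ∑ i, inner ℝ (x i) v • x i‖ ≤ ‖v‖ := by
  set s := ∑ i, inner ℝ (x i) v • x i
  set D := ∑ i, inner ℝ (x i) v ^ 2
  have hD : 0 ≤ D := sum_nonneg fun i _ => sq_nonneg _
  have hs : c ^ 2 * ‖s‖ ^ 2 ≤ 2 * c * D :=
    calc c ^ 2 * ‖s‖ ^ 2 ≤ c ^ 2 * (Fintype.card ι * D) := by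
          gcongr; exact norm_sum_inner_smul_sq_le hx v
      _ = c * (c * Fintype.card ι) * D := by ring
      _ ≤ c * 2 * D := by gcongr
      _ = 2 * c * D := by ring
  have hsq : ‖v - c • s‖ ^ 2 ≤ ‖v‖ ^ 2 := by
    rw [norm_sub_sq_real, real_inner_smul_right, inner_sum_inner_smul, norm_smul, mul_pow,
      Real.norm_eq_abs, sq_abs]
    linarith
  exact le_of_sq_le_sq hsq (norm_nonneg v)

lemma gdStep_sub_gdStep (c : ℝ) (x : ι → E) (y : ι → ℝ) (θ θ' : E) :
    gdStep c x y θ - gdStep c x y θ' =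
      (θ - θ') - c • ∑ i, inner ℝ (x i) (θ - θ') • x i := by
  simp only [gdStep, inner_sub_right, sub_smul, sum_sub_distrib, smul_sub]
  abel

lemma gdStep_sub_gdStep_of_agree_off {x x' : ι → E} {y y' : ι → ℝ} {i₀ : ι}
    (hagree : ∀ i, i ≠ i₀ → x i = x' i ∧ y i = y' i) (c : ℝ) (θ : E) :
    gdStep c x y θ - gdStep c x' y' θ =
      c • ((y i₀ - inner ℝ (x i₀) θ) • x i₀ - (y' i₀ - inner ℝ (x' i₀) θ) • x' i₀) := by
  rw [gdStep, gdStep, add_sub_add_left_eq_sub, ← smul_sub, ← sum_sub_distrib,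
    sum_eq_single i₀ (fun i _ hi => by rw [(hagree i hi).1, (hagree i hi).2, sub_self])
      (fun h => absurd (mem_univ i₀) h)]

lemma norm_residual_smul_le {a : E} {b V B : ℝ} {θ : E} (ha : ‖a‖ ≤ 1) (hb : |b| ≤ V)
    (hθ : ‖θ‖ ≤ B) : ‖(b - inner ℝ a θ) • a‖ ≤ V + B := by
  have hinner : |inner ℝ a θ| ≤ B :=
    (abs_real_inner_le_norm a θ).trans (by nlinarith [norm_nonneg a, norm_nonneg θ])
  rw [norm_smul, Real.norm_eq_abs]
  calc |b - inner ℝ a θ| * ‖a‖ ≤ |b - inner ℝ a θ| := mul_le_of_le_one_right (abs_nonneg _) ha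
    _ ≤ |b| + |inner ℝ a θ| := abs_sub _ _
    _ ≤ V + B := add_le_add hb hinner

lemma norm_gdStep_sub_gdStep_le {x x' : ι → E} {y y' : ι → ℝ} {i₀ : ι} {c V B : ℝ}
    (hagree : ∀ i, i ≠ i₀ → x i = x' i ∧ y i = y' i)
    (hx : ∀ i, ‖x i‖ ≤ 1) (hx' : ∀ i, ‖x' i‖ ≤ 1) (hy : ∀ i, |y i| ≤ V) (hy' : ∀ i, |y' i| ≤ V)
    (hc : 0 ≤ c) (hcn : c * Fintype.card ι ≤ 2) {θ θ' : E} (hθ' : ‖θ'‖ ≤ B) :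
    ‖gdStep c x y θ - gdStep c x' y' θ'‖ ≤ ‖θ - θ'‖ + c * (2 * (V + B)) := by
  have hdata : ‖gdStep c x y θ' - gdStep c x' y' θ'‖ ≤ c * (2 * (V + B)) := by
    rw [gdStep_sub_gdStep_of_agree_off hagree, norm_smul, Real.norm_of_nonneg hc, two_mul]
    gcongr
    exact (norm_sub_le _ _).trans <| add_le_add (norm_residual_smul_le (hx i₀) (hy i₀) hθ')
      (norm_residual_smul_le (hx' i₀) (hy' i₀) hθ')
  calc ‖gdStep c x y θ - gdStep c x' y' θ'‖
      ≤ ‖gdStep c x y θ - gdStep c x y θ'‖ + ‖gdStep c x y θ' - gdStep c x' y' θ'‖ :=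
        norm_sub_le_norm_sub_add_norm_sub _ _ _
    _ ≤ ‖θ - θ'‖ + c * (2 * (V + B)) := by
        rw [gdStep_sub_gdStep]
        exact add_le_add (norm_sub_smul_sum_inner_smul_le hx hc hcn _) hdata

end GradientStep

/-- **Uniform stability of gradient descent on neighboring noise datasets.**  Let the two
designs `x, x'` (rows of Euclidean norm at most 1) and noise vectors `ε, ε'` (entries
bounded by `V`) agree except possibly at one index `i₀`. For step size `0 < λ ≤ 1`, the
gradient descent iterates for the variance training from zero initialization satisfy
`‖θ⁽ᵀ⁾ - θ'⁽ᵀ⁾‖ ≤ (2Tλ/n)(V + B)` provided `‖θ'⁽ᵗ⁾‖ ≤ B` for all `t < T`. -/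
theorem gd_uniform_stability (n p : ℕ) (hn : 0 < n)
    (x x' : Fin n → EuclideanSpace ℝ (Fin p)) (ε ε' : Fin n → ℝ)
    (V B lam : ℝ) (hlam0 : 0 < lam) (hlam1 : lam ≤ 1)
    (i₀ : Fin n) (hagree : ∀ i, i ≠ i₀ → x i = x' i ∧ ε i = ε' i)
    (hx : ∀ i, ‖x i‖ ≤ 1) (hx' : ∀ i, ‖x' i‖ ≤ 1)
    (hε : ∀ i, |ε i| ≤ V) (hε' : ∀ i, |ε' i| ≤ V)
    (θ θ' : ℕ → EuclideanSpace ℝ (Fin p))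
    (h0 : θ 0 = 0) (h0' : θ' 0 = 0)
    (hrec : ∀ t, θ (t + 1) = θ t +
      (lam / n) • ∑ i, (ε i - (inner ℝ (x i) (θ t) : ℝ)) • x i)
    (hrec' : ∀ t, θ' (t + 1) = θ' t +
      (lam / n) • ∑ i, (ε' i - (inner ℝ (x' i) (θ' t) : ℝ)) • x' i)
    (T : ℕ) (hB : ∀ t < T, ‖θ' t‖ ≤ B) :
    ‖θ T - θ' T‖ ≤ 2 * T * lam / n * (V + B) := by
  have hc : 0 ≤ lam / n := by positivity
  have hcn : lam / n * Fintype.card (Fin n) ≤ 2 := by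
    rw [Fintype.card_fin, div_mul_cancel₀ _ (Nat.cast_ne_zero.mpr hn.ne')]
    linarith
  suffices ∀ t ≤ T, ‖θ t - θ' t‖ ≤ t * (lam / n * (2 * (V + B))) by
    convert this T le_rfl using 1
    ring
  intro t ht
  induction t with
  | zero => simp [h0, h0']
  | succ t ih =>
    have hstep : ‖θ (t + 1) - θ' (t + 1)‖ ≤ ‖θ t - θ' t‖ + lam / n * (2 * (V + B)) := by
      rw [hrec, hrec']
      exact norm_gdStep_sub_gdStep_le hagree hx hx' hε hε' hc hcn (hB t ht)
    push_cast
    linarith [ih (Nat.le_of_succ_le ht)]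
end
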